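/- Let λ > 0 and S = diag(s₁, …, s_d) with distinct positive entries. Suppose A, B ∈ ℝ^{d×k} satisfy λBᵀ = Aᵀ(S − ABᵀ) and λA = (S − ABᵀ)B. Then AAᵀ is a diagonal matrix, and, denoting by aᵢ, bᵢ the i-th rows of A, B, for all i ≠ j one has aᵢᵀaⱼ = 0, bᵢᵀbⱼ = 0, and aᵢᵀbⱼ = 0, and for all i, aᵢ = bᵢ. -/

import Mathlib

open Matrix

/-- Squared Frobenius norm of a real matrix. -/
noncomputable def frobSq {m n : ℕ} (A : Matrix (Fin m) (Fin n) ℝ) : ℝ :=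
  ∑ i, ∑ j, (A i j) ^ 2

/-- Frobenius norm. -/
noncomputable def frobNorm {m n : ℕ} (A : Matrix (Fin m) (Fin n) ℝ) : ℝ :=
  Real.sqrt (frobSq A)

lemma wwT_posSemidef {m n : ℕ} (W : Matrix (Fin m) (Fin n) ℝ) :
    (W * Wᵀ).PosSemidef := by
  simpa [Matrix.conjTranspose_eq_transpose_of_trivial] using
    W.posSemidef_self_mul_conjTranspose

/-- The positive semidefinite square root of a positive semidefinite matrix (Mathlib's former
`Matrix.PosSemidef.sqrt`, removed upstream; restored with its old definition). -/
noncomputable def Matrix.PosSemidef.sqrt {n : Type*} [Fintype n] [DecidableEq n]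
    {A : Matrix n n ℝ} (hA : A.PosSemidef) : Matrix n n ℝ :=
  hA.1.eigenvectorUnitary.1 * diagonal ((↑) ∘ (Real.sqrt ·) ∘ hA.1.eigenvalues) *
    (star hA.1.eigenvectorUnitary : Matrix n n ℝ)

/-- Nuclear norm: trace of the PSD square root of `W * Wᵀ`. -/
noncomputable def nuclearNorm {m n : ℕ} (W : Matrix (Fin m) (Fin n) ℝ) : ℝ :=
  (wwT_posSemidef W).sqrt.trace

/-!
At an equilibrium `AᵀA = BᵀB`, so with the positive definite `H = BᵀB + λI` the two equations
read `AH = SB` and `BH = SA`. Evaluating `AHBᵀ`, `BHAᵀ`, `AHAᵀ` and `BHBᵀ` in two ways gives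
`S(AAᵀ) = (BBᵀ)S`, `S(BBᵀ) = (AAᵀ)S`, `S(ABᵀ) = (BAᵀ)S` and `S(BAᵀ) = (ABᵀ)S`, so `AAᵀ`, `BBᵀ`
and `ABᵀ` commute with `S²`, whose diagonal entries are distinct; hence they are diagonal.
Finally `(A - B)H = -S(A - B)`, i.e. each row of `A - B` is annihilated by the invertible
`H + sᵢI`.
-/

section

variable {R : Type*} {m k : Type*} [Fintype m] [Fintype k]

theorem commute_mul_self_of_swap {α : Type*} [Semigroup α] {d p q : α}
    (h₁ : d * q = p * d) (h₂ : d * p = q * d) : Commute (d * d) q := by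
  rw [commute_iff_eq, mul_assoc, h₁, ← mul_assoc, h₂, mul_assoc]

theorem Matrix.apply_eq_zero_of_commute_diagonal [CommRing R] [NoZeroDivisors R] [DecidableEq m]
    {t : m → R} (ht : Function.Injective t) {X : Matrix m m R} (h : Commute (diagonal t) X)
    {i j : m} (hij : i ≠ j) : X i j = 0 := by
  have hij' := congrFun₂ h.eq i j
  rw [diagonal_mul, mul_diagonal] at hij'
  have : (t i - t j) * X i j = 0 := by linear_combination hij'
  exact (mul_eq_zero.mp this).resolve_left (sub_ne_zero.mpr (ht.ne hij))

theorem Matrix.apply_eq_zero_of_diagonal_mul_swap [CommRing R] [NoZeroDivisors R] [DecidableEq m]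
    {t : m → R} (ht : Function.Injective fun i => t i * t i) {P Q : Matrix m m R}
    (h₁ : diagonal t * Q = P * diagonal t) (h₂ : diagonal t * P = Q * diagonal t)
    {i j : m} (hij : i ≠ j) : Q i j = 0 :=
  apply_eq_zero_of_commute_diagonal ht
    (by simpa only [diagonal_mul_diagonal] using commute_mul_self_of_swap h₁ h₂) hij

theorem Matrix.mul_mul_transpose_eq_of_mul_eq_mul [CommRing R]
    {H : Matrix k k R} {D : Matrix m m R} {X X' Y Y' : Matrix m k R}
    (hH : Hᵀ = H) (hD : Dᵀ = D) (hX : X * H = D * X') (hY : Y * H = D * Y') :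
    D * (X' * Yᵀ) = X * Y'ᵀ * D := by
  calc D * (X' * Yᵀ) = X * (Y * H)ᵀ := by
        rw [transpose_mul, hH, ← Matrix.mul_assoc, ← Matrix.mul_assoc, hX]
    _ = X * Y'ᵀ * D := by rw [hY, transpose_mul, hD, Matrix.mul_assoc]

theorem Matrix.eq_of_mul_eq_diagonal_mul_swap [DecidableEq m] [DecidableEq k]
    {s : m → ℝ} (hs : 0 ≤ s) {H : Matrix k k ℝ} (hH : H.PosDef) {A B : Matrix m k ℝ}
    (hA : A * H = diagonal s * B) (hB : B * H = diagonal s * A) : A = B := by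
  funext i
  have hrow : (A i - B i) ᵥ* (H + s i • 1) = 0 ᵥ* (H + s i • 1) := by
    rw [vecMul_add, vecMul_smul, vecMul_one, sub_vecMul, zero_vecMul]
    change (A * H) i - (B * H) i + _ = 0
    rw [hA, hB]
    ext j
    simp only [Pi.add_apply, Pi.sub_apply, diagonal_mul, Pi.smul_apply, smul_eq_mul,
      Pi.zero_apply]
    ring
  have hunit : IsUnit (H + s i • 1) := (hH.add_posSemidef (PosSemidef.one.smul (hs i))).isUnit
  exact sub_eq_zero.mp (vecMul_injective_iff_isUnit.mpr hunit hrow)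

structure IsEquilibrium [Ring R] (lam : R) (S : Matrix m m R) (A B : Matrix m k R) : Prop where
  grad_B : lam • Bᵀ = Aᵀ * (S - A * Bᵀ)
  grad_A : lam • A = (S - A * Bᵀ) * B

namespace IsEquilibrium

variable [CommRing R] {lam : R} {S : Matrix m m R} {A B : Matrix m k R}

theorem transpose_mul_self_eq [NoZeroDivisors R] (h : IsEquilibrium lam S A B) (hlam : lam ≠ 0) :
    Aᵀ * A = Bᵀ * B := by
  refine smul_right_injective _ hlam ?_
  calc lam • (Aᵀ * A) = Aᵀ * (S - A * Bᵀ) * B := by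
        rw [← Matrix.mul_smul, h.grad_A, Matrix.mul_assoc]
    _ = lam • (Bᵀ * B) := by rw [← h.grad_B, Matrix.smul_mul]

theorem mul_gram_add_smul_left [DecidableEq k] (h : IsEquilibrium lam S A B) :
    A * (Bᵀ * B + lam • 1) = S * B := by
  rw [Matrix.mul_add, Matrix.mul_smul, Matrix.mul_one, h.grad_A, Matrix.sub_mul,
    Matrix.mul_assoc]
  abel

theorem mul_gram_add_smul_right [NoZeroDivisors R] [DecidableEq k]
    (h : IsEquilibrium lam S A B) (hS : Sᵀ = S) (hlam : lam ≠ 0) :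
    B * (Bᵀ * B + lam • 1) = S * A := by
  have hB : lam • B = (S - B * Aᵀ) * A := by
    simpa [transpose_sub, transpose_mul, hS] using congrArg transpose h.grad_B
  rw [Matrix.mul_add, Matrix.mul_smul, Matrix.mul_one, hB, Matrix.sub_mul, Matrix.mul_assoc,
    h.transpose_mul_self_eq hlam]
  abel

end IsEquilibrium

end

/-- equilibrium of the regularized 2-layer linear network with
`S = diag(s)`, `s` having distinct positive entries: `AAᵀ` is diagonal, distinct
rows of `A`, of `B`, and mixed rows are orthogonal, and each row of `A` equals
the corresponding row of `B`. -/
theorem two_layer_equilibrium {d k : ℕ} (lam : ℝ) (hlam : 0 < lam)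
    (s : Fin d → ℝ) (hs_pos : ∀ i, 0 < s i) (hs_inj : Function.Injective s)
    (A B : Matrix (Fin d) (Fin k) ℝ)
    (heq1 : lam • Bᵀ = Aᵀ * (Matrix.diagonal s - A * Bᵀ))
    (heq2 : lam • A = (Matrix.diagonal s - A * Bᵀ) * B) :
    (∀ i j, i ≠ j → (A * Aᵀ) i j = 0) ∧
    (∀ i j, i ≠ j → ∑ l, A i l * A j l = 0) ∧
    (∀ i j, i ≠ j → ∑ l, B i l * B j l = 0) ∧
    (∀ i j, i ≠ j → ∑ l, A i l * B j l = 0) ∧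
    (∀ i, A i = B i) := by
  have h : IsEquilibrium lam (diagonal s) A B := ⟨heq1, heq2⟩
  set H := Bᵀ * B + lam • 1
  have hH : H.PosDef :=
    .posSemidef_add (by simpa using wwT_posSemidef Bᵀ) (PosDef.one.smul hlam)
  have hHT : Hᵀ = H := by simp [H, transpose_add, transpose_mul]
  have hA : A * H = diagonal s * B := h.mul_gram_add_smul_left
  have hB : B * H = diagonal s * A := h.mul_gram_add_smul_right (diagonal_transpose s) hlam.ne'
  have hsq : Function.Injective fun i => s i * s i := fun i j hij =>
    hs_inj ((mul_self_inj (hs_pos i).le (hs_pos j).le).mp hij)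
  have intertwine {X X' Y Y' : Matrix (Fin d) (Fin k) ℝ} (hX : X * H = diagonal s * X')
      (hY : Y * H = diagonal s * Y') : diagonal s * (X' * Yᵀ) = X * Y'ᵀ * diagonal s :=
    mul_mul_transpose_eq_of_mul_eq_mul hHT (diagonal_transpose s) hX hY
  have hAA (i j) (hij : i ≠ j) :=
    apply_eq_zero_of_diagonal_mul_swap hsq (intertwine hB hA) (intertwine hA hB) hij
  have hBB (i j) (hij : i ≠ j) :=
    apply_eq_zero_of_diagonal_mul_swap hsq (intertwine hA hB) (intertwine hB hA) hij
  have hAB (i j) (hij : i ≠ j) :=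
    apply_eq_zero_of_diagonal_mul_swap hsq (intertwine hB hB) (intertwine hA hA) hij
  have hAeqB := eq_of_mul_eq_diagonal_mul_swap (fun i => (hs_pos i).le) hH hA hB
  exact ⟨hAA, hAA, hBB, hAB, congrFun hAeqB⟩
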